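/- Let T ∈ (0,∞), d ∈ ℕ, let O ⊆ ℝ^d be an open set, let V : (0,T) × O → (0,∞) be twice continuously differentiable, let G : (0,T) × O × ℝ × ℝ^d × S_d → ℝ be degenerate elliptic, and let u : (0,T) × O → ℝ be a viscosity subsolution of ∂u/∂t (t,x) − G(t,x, u(t,x), (∇_x u)(t,x), (Hess_x u)(t,x)) = 0. Define G̃ : (0,T) × O × ℝ × ℝ^d × S_d → ℝ by G̃(t,x,r,p,A) := (1/V(t,x)) · G( t, x, r·V(t,x), p·V(t,x) + r·(∇_x V)(t,x), A·V(t,x) + p·((∇_x V)(t,x))ᵀ + (∇_x V)(t,x)·pᵀ + r·(Hess_x V)(t,x) ) − r · (∂V/∂t)(t,x) / V(t,x). Then G̃ is degenerate elliptic, and the function ũ : (0,T) × O → ℝ defined by ũ(t,x) := u(t,x)/V(t,x) is a viscosity subsolution of ∂ũ/∂t (t,x) − G̃(t,x, ũ(t,x), (∇_x ũ)(t,x), (Hess_x ũ)(t,x)) = 0. -/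

import Mathlib

open Real

/-- The time derivative `∂φ/∂t` of a function `φ : ℝ × ℝ^d → ℝ` of time and space. -/
noncomputable def timeDeriv {d : ℕ} (φ : ℝ × EuclideanSpace ℝ (Fin d) → ℝ)
    (y : ℝ × EuclideanSpace ℝ (Fin d)) : ℝ :=
  fderiv ℝ φ y (1, 0)

/-- The spatial gradient `∇ₓφ` of a function `φ : ℝ × ℝ^d → ℝ` of time and space. -/
noncomputable def spaceGrad {d : ℕ} (φ : ℝ × EuclideanSpace ℝ (Fin d) → ℝ)
    (y : ℝ × EuclideanSpace ℝ (Fin d)) : EuclideanSpace ℝ (Fin d) :=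
  WithLp.toLp 2 (fun i => fderiv ℝ φ y (0, EuclideanSpace.single i 1))

/-- The spatial Hessian `Hessₓφ` of a function `φ : ℝ × ℝ^d → ℝ` of time and space. -/
noncomputable def spaceHess {d : ℕ} (φ : ℝ × EuclideanSpace ℝ (Fin d) → ℝ)
    (y : ℝ × EuclideanSpace ℝ (Fin d)) : Matrix (Fin d) (Fin d) ℝ :=
  Matrix.of fun i j =>
    fderiv ℝ (fun z => fderiv ℝ φ z (0, EuclideanSpace.single j 1)) y
      (0, EuclideanSpace.single i 1)

/-- `G : (0,T) × O × ℝ × ℝ^d × S_d → ℝ` is degenerate elliptic if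
`G(t,x,r,p,A) ≤ G(t,x,r,p,B)` whenever `A ≤ B` (i.e. `B - A` is positive
semidefinite). -/
def ParabolicDegenerateElliptic {d : ℕ} (T : ℝ) (O : Set (EuclideanSpace ℝ (Fin d)))
    (G : ℝ → EuclideanSpace ℝ (Fin d) → ℝ → EuclideanSpace ℝ (Fin d) →
      Matrix (Fin d) (Fin d) ℝ → ℝ) : Prop :=
  ∀ t ∈ Set.Ioo 0 T, ∀ x ∈ O, ∀ (r : ℝ) (p : EuclideanSpace ℝ (Fin d))
    (A B : Matrix (Fin d) (Fin d) ℝ),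
    A.IsSymm → B.IsSymm → (B - A).PosSemidef → G t x r p A ≤ G t x r p B

/-- `u : (0,T) × O → ℝ` is a viscosity subsolution of
`∂u/∂t − G(t, x, u, ∇ₓu, Hessₓu) = 0`, i.e. a viscosity subsolution of `F = 0` on the
open set `(0,T) × O ⊆ ℝ^{1+d}`, where `F((t,x), r, (q,p), M) = q − G(t,x,r,p,A)` and
only the time component `q` of the gradient variable, the space components `p`, and
the spatial block `A` of the Hessian variable `M` enter `F`: `u` is upper
semicontinuous on `(0,T) × O` and for every `C²` test function `φ` on `(0,T) × O`
with `φ(y) = u(y)` and `φ ≥ u`, `∂φ/∂t(y) − G(y, φ(y), ∇ₓφ(y), Hessₓφ(y)) ≤ 0`. -/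
def IsParabolicViscositySubsolution {d : ℕ} (T : ℝ)
    (O : Set (EuclideanSpace ℝ (Fin d)))
    (G : ℝ → EuclideanSpace ℝ (Fin d) → ℝ → EuclideanSpace ℝ (Fin d) →
      Matrix (Fin d) (Fin d) ℝ → ℝ)
    (u : ℝ → EuclideanSpace ℝ (Fin d) → ℝ) : Prop :=
  UpperSemicontinuousOn (fun y : ℝ × EuclideanSpace ℝ (Fin d) => u y.1 y.2)
      (Set.Ioo 0 T ×ˢ O) ∧
    ∀ φ : ℝ × EuclideanSpace ℝ (Fin d) → ℝ, ContDiffOn ℝ 2 φ (Set.Ioo 0 T ×ˢ O) →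
      ∀ y ∈ Set.Ioo 0 T ×ˢ O, φ y = u y.1 y.2 →
        (∀ z ∈ Set.Ioo 0 T ×ˢ O, u z.1 z.2 ≤ φ z) →
          timeDeriv φ y - G y.1 y.2 (φ y) (spaceGrad φ y) (spaceHess φ y) ≤ 0

/-- `u : (0,T) × O → ℝ` is a viscosity supersolution of
`∂u/∂t − G(t, x, u, ∇ₓu, Hessₓu) = 0`; see `IsParabolicViscositySubsolution`. -/
def IsParabolicViscositySupersolution {d : ℕ} (T : ℝ)
    (O : Set (EuclideanSpace ℝ (Fin d)))
    (G : ℝ → EuclideanSpace ℝ (Fin d) → ℝ → EuclideanSpace ℝ (Fin d) →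
      Matrix (Fin d) (Fin d) ℝ → ℝ)
    (u : ℝ → EuclideanSpace ℝ (Fin d) → ℝ) : Prop :=
  LowerSemicontinuousOn (fun y : ℝ × EuclideanSpace ℝ (Fin d) => u y.1 y.2)
      (Set.Ioo 0 T ×ˢ O) ∧
    ∀ φ : ℝ × EuclideanSpace ℝ (Fin d) → ℝ, ContDiffOn ℝ 2 φ (Set.Ioo 0 T ×ˢ O) →
      ∀ y ∈ Set.Ioo 0 T ×ˢ O, φ y = u y.1 y.2 →
        (∀ z ∈ Set.Ioo 0 T ×ˢ O, φ z ≤ u z.1 z.2) →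
          0 ≤ timeDeriv φ y - G y.1 y.2 (φ y) (spaceGrad φ y) (spaceHess φ y)

/-- `u : (0,T) × O → ℝ` is a viscosity solution of
`∂u/∂t − G(t, x, u, ∇ₓu, Hessₓu) = 0` if it is both a viscosity subsolution and a
viscosity supersolution; see `IsParabolicViscositySubsolution`. -/
def IsParabolicViscositySolution {d : ℕ} (T : ℝ)
    (O : Set (EuclideanSpace ℝ (Fin d)))
    (G : ℝ → EuclideanSpace ℝ (Fin d) → ℝ → EuclideanSpace ℝ (Fin d) →
      Matrix (Fin d) (Fin d) ℝ → ℝ)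
    (u : ℝ → EuclideanSpace ℝ (Fin d) → ℝ) : Prop :=
  IsParabolicViscositySubsolution T O G u ∧ IsParabolicViscositySupersolution T O G u



/-! If `φ` touches `u / W` from above at `y`, then `φ W` touches `u` from above at `y`. The Leibniz
rule for `∂ₜ`, `∇ₓ` and `Hessₓ` of `φ W` turns the subsolution inequality for `φ W` into `W(y)`
times the one for `φ` with `G̃`. Degenerate ellipticity passes from `G` to `G̃` because for fixed
`(t, x, r, p)` the Hessian argument of `G` in `G̃` is `A ↦ W(t,x) A + S` with `S` symmetric (the
Hessian of a `C²` function is symmetric) and `W(t,x) ≥ 0`. -/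

open Matrix Topology

section SecondDerivative

variable {𝕜 : Type*} [NontriviallyNormedField 𝕜] {E : Type*} [NormedAddCommGroup E]
  [NormedSpace 𝕜 E] {f g : E → 𝕜} {y : E}

theorem fderiv_fderiv_mul_apply (hf : ContDiffAt 𝕜 2 f y) (hg : ContDiffAt 𝕜 2 g y) (v w : E) :
    fderiv 𝕜 (fun z => fderiv 𝕜 (fun z => f z * g z) z w) y v =
      g y * fderiv 𝕜 (fun z => fderiv 𝕜 f z w) y v + fderiv 𝕜 f y v * fderiv 𝕜 g y w +
        fderiv 𝕜 g y v * fderiv 𝕜 f y w + f y * fderiv 𝕜 (fun z => fderiv 𝕜 g z w) y v := by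
  have hdiff_near : ∀ {h : E → 𝕜}, ContDiffAt 𝕜 2 h y → ∀ᶠ z in 𝓝 y, DifferentiableAt 𝕜 h z :=
    fun hh => (hh.eventually (by simp)).mono fun _ hz => hz.differentiableAt (by norm_num)
  have hdiff_fderiv : ∀ {h : E → 𝕜}, ContDiffAt 𝕜 2 h y →
      DifferentiableAt 𝕜 (fun z => fderiv 𝕜 h z w) y :=
    fun hh => ((hh.fderiv_right (m := 1) (by norm_num)).differentiableAt (by norm_num)).clm_apply
      (differentiableAt_const w)
  have hprod : (fun z => fderiv 𝕜 (fun z => f z * g z) z w) =ᶠ[𝓝 y]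
      fun z => f z * fderiv 𝕜 g z w + g z * fderiv 𝕜 f z w := by
    filter_upwards [hdiff_near hf, hdiff_near hg] with z hfz hgz
    simp [fderiv_fun_mul hfz hgz]
  have hfy := hf.differentiableAt (by norm_num)
  have hgy := hg.differentiableAt (by norm_num)
  rw [hprod.fderiv_eq, ((hfy.hasFDerivAt.fun_mul (hdiff_fderiv hg).hasFDerivAt).fun_add
    (hgy.hasFDerivAt.fun_mul (hdiff_fderiv hf).hasFDerivAt)).fderiv]
  simp only [_root_.add_apply, _root_.smul_apply, smul_eq_mul]
  ring

end SecondDerivative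

section SpaceTimeDerivatives

variable {d : ℕ} {f g : ℝ × EuclideanSpace ℝ (Fin d) → ℝ} {y : ℝ × EuclideanSpace ℝ (Fin d)}

theorem timeDeriv_mul (hf : DifferentiableAt ℝ f y) (hg : DifferentiableAt ℝ g y) :
    timeDeriv (fun z => f z * g z) y = timeDeriv f y * g y + f y * timeDeriv g y := by
  simp only [timeDeriv, fderiv_fun_mul hf hg, _root_.add_apply, _root_.smul_apply, smul_eq_mul]
  ring

theorem spaceGrad_mul (hf : DifferentiableAt ℝ f y) (hg : DifferentiableAt ℝ g y) :
    spaceGrad (fun z => f z * g z) y = g y • spaceGrad f y + f y • spaceGrad g y := by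
  ext i
  simp only [spaceGrad, fderiv_fun_mul hf hg, _root_.add_apply, _root_.smul_apply, smul_eq_mul,
    PiLp.add_apply, PiLp.smul_apply]
  ring

theorem spaceHess_mul (hf : ContDiffAt ℝ 2 f y) (hg : ContDiffAt ℝ 2 g y) :
    spaceHess (fun z => f z * g z) y =
      g y • spaceHess f y + (vecMulVec (spaceGrad f y) (spaceGrad g y) +
        vecMulVec (spaceGrad g y) (spaceGrad f y)) + f y • spaceHess g y := by
  ext i j
  simp only [spaceHess, spaceGrad, of_apply, Matrix.add_apply, Matrix.smul_apply, vecMulVec_apply,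
    smul_eq_mul, fderiv_fderiv_mul_apply hf hg]
  ring

theorem spaceHess_isSymm (hf : ContDiffAt ℝ 2 f y) : (spaceHess f y).IsSymm := by
  have hsymm := hf.isSymmSndFDerivAt (by simp)
  have hfd : DifferentiableAt ℝ (fderiv ℝ f) y :=
    (hf.fderiv_right (m := 1) (by norm_num)).differentiableAt (by norm_num)
  ext i j
  simp only [spaceHess, transpose_apply, of_apply,
    fderiv_clm_apply hfd (differentiableAt_const _)]
  simpa using hsymm _ _

end SpaceTimeDerivatives

theorem UpperSemicontinuousOn.div_of_pos {α : Type*} [TopologicalSpace α] {f g : α → ℝ}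
    {s : Set α} (hf : UpperSemicontinuousOn f s) (hg : ContinuousOn g s)
    (hpos : ∀ x ∈ s, 0 < g x) : UpperSemicontinuousOn (fun x => f x / g x) s := by
  intro x hx c hc
  have hsub : UpperSemicontinuousWithinAt (fun z => f z - c * g z) s x :=
    UpperSemicontinuousWithinAt.add (hf x hx)
      ((continuousWithinAt_const.mul (hg x hx)).neg).upperSemicontinuousWithinAt
  have hlt : f x - c * g x < 0 := by
    have := (div_lt_iff₀ (hpos x hx)).mp hc
    linarith
  filter_upwards [hsub 0 hlt, self_mem_nhdsWithin] with z hz hzs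
  exact (div_lt_iff₀ (hpos z hzs)).mpr (by linarith)

section Scaling

variable {d : ℕ} {T : ℝ} {O : Set (EuclideanSpace ℝ (Fin d))}
  {G : ℝ → EuclideanSpace ℝ (Fin d) → ℝ → EuclideanSpace ℝ (Fin d) →
    Matrix (Fin d) (Fin d) ℝ → ℝ}
  {W : ℝ × EuclideanSpace ℝ (Fin d) → ℝ}

noncomputable def scaledHamiltonian
    (G : ℝ → EuclideanSpace ℝ (Fin d) → ℝ → EuclideanSpace ℝ (Fin d) →
      Matrix (Fin d) (Fin d) ℝ → ℝ)
    (W : ℝ × EuclideanSpace ℝ (Fin d) → ℝ) :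
    ℝ → EuclideanSpace ℝ (Fin d) → ℝ → EuclideanSpace ℝ (Fin d) →
      Matrix (Fin d) (Fin d) ℝ → ℝ :=
  fun t x r p A =>
    (1 / W (t, x)) * G t x (r * W (t, x)) (W (t, x) • p + r • spaceGrad W (t, x))
      (W (t, x) • A + (vecMulVec p (spaceGrad W (t, x)) + vecMulVec (spaceGrad W (t, x)) p) +
        r • spaceHess W (t, x)) -
    r * (timeDeriv W (t, x) / W (t, x))

theorem ParabolicDegenerateElliptic.congr {G' : ℝ → EuclideanSpace ℝ (Fin d) → ℝ →
      EuclideanSpace ℝ (Fin d) → Matrix (Fin d) (Fin d) ℝ → ℝ}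
    (hG : ParabolicDegenerateElliptic T O G) (heq : ∀ t ∈ Set.Ioo 0 T, ∀ x ∈ O, G' t x = G t x) :
    ParabolicDegenerateElliptic T O G' := by
  intro t ht x hx r p A B hA hB hAB
  rw [heq t ht x hx]
  exact hG t ht x hx r p A B hA hB hAB

theorem IsParabolicViscositySubsolution.congr {G' : ℝ → EuclideanSpace ℝ (Fin d) → ℝ →
      EuclideanSpace ℝ (Fin d) → Matrix (Fin d) (Fin d) ℝ → ℝ}
    {u : ℝ → EuclideanSpace ℝ (Fin d) → ℝ} (hsub : IsParabolicViscositySubsolution T O G u)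
    (heq : ∀ t ∈ Set.Ioo 0 T, ∀ x ∈ O, G' t x = G t x) :
    IsParabolicViscositySubsolution T O G' u := by
  refine ⟨hsub.1, fun φ hφ y hy hφy hle => ?_⟩
  rw [heq y.1 hy.1 y.2 hy.2]
  exact hsub.2 φ hφ y hy hφy hle

theorem ParabolicDegenerateElliptic.scaledHamiltonian (hG : ParabolicDegenerateElliptic T O G)
    (hWnonneg : ∀ y ∈ Set.Ioo 0 T ×ˢ O, 0 ≤ W y)
    (hW : ∀ y ∈ Set.Ioo 0 T ×ˢ O, ContDiffAt ℝ 2 W y) :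
    ParabolicDegenerateElliptic T O (scaledHamiltonian G W) := by
  intro t ht x hx r p A B hA hB hAB
  set w := W (t, x)
  set q := spaceGrad W (t, x)
  set H := spaceHess W (t, x)
  have hsymm : (vecMulVec p q + vecMulVec q p + r • H).IsSymm := by
    refine IsSymm.add ?_ ((spaceHess_isSymm (hW _ ⟨ht, hx⟩)).smul r)
    simp [IsSymm, transpose_vecMulVec, add_comm]
  have hgap : (w • B + (vecMulVec p q + vecMulVec q p) + r • H) -
      (w • A + (vecMulVec p q + vecMulVec q p) + r • H) = w • (B - A) := by
    rw [smul_sub]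
    abel
  have hmono := hG t ht x hx (r * w) (w • p + r • q) _ _
    (by simpa only [add_assoc] using (hA.smul w).add hsymm)
    (by simpa only [add_assoc] using (hB.smul w).add hsymm)
    (hgap ▸ hAB.smul (hWnonneg _ ⟨ht, hx⟩))
  exact sub_le_sub_right (mul_le_mul_of_nonneg_left hmono
    (one_div_nonneg.mpr (hWnonneg _ ⟨ht, hx⟩))) _

theorem timeDeriv_sub_scaledHamiltonian {φ : ℝ × EuclideanSpace ℝ (Fin d) → ℝ}
    {y : ℝ × EuclideanSpace ℝ (Fin d)} (hφ : ContDiffAt ℝ 2 φ y) (hW : ContDiffAt ℝ 2 W y)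
    (hWy : W y ≠ 0) :
    timeDeriv φ y - scaledHamiltonian G W y.1 y.2 (φ y) (spaceGrad φ y) (spaceHess φ y) =
      (W y)⁻¹ * (timeDeriv (fun z => φ z * W z) y -
        G y.1 y.2 (φ y * W y) (spaceGrad (fun z => φ z * W z) y)
          (spaceHess (fun z => φ z * W z) y)) := by
  have hφd := hφ.differentiableAt (by norm_num)
  have hWd := hW.differentiableAt (by norm_num)
  rw [timeDeriv_mul hφd hWd, spaceGrad_mul hφd hWd, spaceHess_mul hφ hW]
  simp only [scaledHamiltonian, Prod.mk.eta]
  field_simp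
  ring

theorem IsParabolicViscositySubsolution.div {u : ℝ → EuclideanSpace ℝ (Fin d) → ℝ}
    (hO : IsOpen O) (hWpos : ∀ y ∈ Set.Ioo 0 T ×ˢ O, 0 < W y)
    (hW : ContDiffOn ℝ 2 W (Set.Ioo 0 T ×ˢ O)) (hsub : IsParabolicViscositySubsolution T O G u) :
    IsParabolicViscositySubsolution T O (scaledHamiltonian G W) (fun t x => u t x / W (t, x)) := by
  have hU : IsOpen (Set.Ioo 0 T ×ˢ O) := isOpen_Ioo.prod hO
  refine ⟨hsub.1.div_of_pos hW.continuousOn hWpos, fun φ hφ y hy hφy hle => ?_⟩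
  have hψy : φ y * W y = u y.1 y.2 := by
    rw [hφy]
    exact div_mul_cancel₀ _ (hWpos y hy).ne'
  have hψle : ∀ z ∈ Set.Ioo 0 T ×ˢ O, u z.1 z.2 ≤ φ z * W z :=
    fun z hz => (div_le_iff₀ (hWpos z hz)).mp (hle z hz)
  rw [timeDeriv_sub_scaledHamiltonian (hφ.contDiffAt (hU.mem_nhds hy))
    (hW.contDiffAt (hU.mem_nhds hy)) (hWpos y hy).ne']
  exact mul_nonpos_of_nonneg_of_nonpos (inv_nonneg.mpr (hWpos y hy).le)
    (hsub.2 _ (hφ.mul hW) y hy hψy hψle)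

end Scaling

theorem scaling_of_viscosity_subsolutions_general
    {d : ℕ} (T : ℝ)
    (O : Set (EuclideanSpace ℝ (Fin d))) (hO : IsOpen O)
    (V : ℝ → EuclideanSpace ℝ (Fin d) → ℝ)
    (hVpos : ∀ t ∈ Set.Ioo 0 T, ∀ x ∈ O, 0 < V t x)
    (hVC2 : ContDiffOn ℝ 2 (fun y : ℝ × EuclideanSpace ℝ (Fin d) => V y.1 y.2)
      (Set.Ioo 0 T ×ˢ O))
    (G Gt : ℝ → EuclideanSpace ℝ (Fin d) → ℝ → EuclideanSpace ℝ (Fin d) →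
      Matrix (Fin d) (Fin d) ℝ → ℝ)
    (hG : ParabolicDegenerateElliptic T O G)
    (u : ℝ → EuclideanSpace ℝ (Fin d) → ℝ)
    (hsub : IsParabolicViscositySubsolution T O G u)
    (hGt : ∀ t ∈ Set.Ioo 0 T, ∀ x ∈ O, ∀ (r : ℝ) (p : EuclideanSpace ℝ (Fin d))
      (A : Matrix (Fin d) (Fin d) ℝ),
      Gt t x r p A =
        (1 / V t x) * G t x (r * V t x)
          (V t x • p +
            r • spaceGrad (fun y : ℝ × EuclideanSpace ℝ (Fin d) => V y.1 y.2) (t, x))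
          (V t x • A +
            Matrix.of (fun i j =>
              p i * spaceGrad (fun y : ℝ × EuclideanSpace ℝ (Fin d) => V y.1 y.2) (t, x) j +
              spaceGrad (fun y : ℝ × EuclideanSpace ℝ (Fin d) => V y.1 y.2) (t, x) i * p j) +
            r • spaceHess (fun y : ℝ × EuclideanSpace ℝ (Fin d) => V y.1 y.2) (t, x)) -
        r * (timeDeriv (fun y : ℝ × EuclideanSpace ℝ (Fin d) => V y.1 y.2) (t, x) / V t x)) :
    ParabolicDegenerateElliptic T O Gt ∧
      IsParabolicViscositySubsolution T O Gt (fun t x => u t x / V t x) := by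
  have hU : IsOpen (Set.Ioo 0 T ×ˢ O) := isOpen_Ioo.prod hO
  have hWpos : ∀ y ∈ Set.Ioo 0 T ×ˢ O, 0 < V y.1 y.2 := fun y hy => hVpos y.1 hy.1 y.2 hy.2
  have hGt_eq : ∀ t ∈ Set.Ioo 0 T, ∀ x ∈ O,
      Gt t x = scaledHamiltonian G (fun y => V y.1 y.2) t x :=
    fun t ht x hx => funext₃ (hGt t ht x hx)
  exact ⟨(hG.scaledHamiltonian (fun y hy => (hWpos y hy).le)
      fun y hy => hVC2.contDiffAt (hU.mem_nhds hy)).congr hGt_eq,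
    (hsub.div hO hWpos hVC2).congr hGt_eq⟩

/-- scaling of viscosity subsolutions: if `u` is a viscosity
subsolution of `∂u/∂t − G(t,x,u,∇ₓu,Hessₓu) = 0` on `(0,T) × O`, `V : (0,T) × O → (0,∞)`
is `C²`, and `G̃` is defined from `G` and `V` by the displayed formula, then `G̃` is
degenerate elliptic and `ũ = u/V` is a viscosity subsolution of
`∂ũ/∂t − G̃(t,x,ũ,∇ₓũ,Hessₓũ) = 0`. -/
theorem scaling_of_viscosity_subsolutions
    {d : ℕ} (hd : 0 < d) (T : ℝ) (hT : 0 < T)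
    (O : Set (EuclideanSpace ℝ (Fin d))) (hO : IsOpen O)
    (V : ℝ → EuclideanSpace ℝ (Fin d) → ℝ)
    (hVpos : ∀ t ∈ Set.Ioo 0 T, ∀ x ∈ O, 0 < V t x)
    (hVC2 : ContDiffOn ℝ 2 (fun y : ℝ × EuclideanSpace ℝ (Fin d) => V y.1 y.2)
      (Set.Ioo 0 T ×ˢ O))
    (G Gt : ℝ → EuclideanSpace ℝ (Fin d) → ℝ → EuclideanSpace ℝ (Fin d) →
      Matrix (Fin d) (Fin d) ℝ → ℝ)
    (hG : ParabolicDegenerateElliptic T O G)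
    (u : ℝ → EuclideanSpace ℝ (Fin d) → ℝ)
    (hsub : IsParabolicViscositySubsolution T O G u)
    (hGt : ∀ t ∈ Set.Ioo 0 T, ∀ x ∈ O, ∀ (r : ℝ) (p : EuclideanSpace ℝ (Fin d))
      (A : Matrix (Fin d) (Fin d) ℝ),
      Gt t x r p A =
        (1 / V t x) * G t x (r * V t x)
          (V t x • p +
            r • spaceGrad (fun y : ℝ × EuclideanSpace ℝ (Fin d) => V y.1 y.2) (t, x))
          (V t x • A +
            Matrix.of (fun i j =>
              p i * spaceGrad (fun y : ℝ × EuclideanSpace ℝ (Fin d) => V y.1 y.2) (t, x) j +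
              spaceGrad (fun y : ℝ × EuclideanSpace ℝ (Fin d) => V y.1 y.2) (t, x) i * p j) +
            r • spaceHess (fun y : ℝ × EuclideanSpace ℝ (Fin d) => V y.1 y.2) (t, x)) -
        r * (timeDeriv (fun y : ℝ × EuclideanSpace ℝ (Fin d) => V y.1 y.2) (t, x) / V t x)) :
    ParabolicDegenerateElliptic T O Gt ∧
      IsParabolicViscositySubsolution T O Gt (fun t x => u t x / V t x) :=
  scaling_of_viscosity_subsolutions_general T O hO V hVpos hVC2 G Gt hG u hsub hGt
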